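/- For fixed $\varepsilon > 0$, the function $B_{\varepsilon}(\alpha) = \Phi\left(\sqrt{\varepsilon/2}\left(\frac{1}{\alpha} - \alpha\right)\right) - e^{\varepsilon}\Phi\left(-\sqrt{\varepsilon/2}\left(\frac{1}{\alpha} + \alpha\right)\right)$ is monotonically decreasing on $\alpha \in (0, \infty)$. -/

import Mathlib

open MeasureTheory

/-- The standard Gaussian cumulative distribution function. -/
noncomputable def Phi (t : ℝ) : ℝ :=
  ∫ y in Set.Iic t, Real.exp (-y ^ 2 / 2) / Real.sqrt (2 * Real.pi)

/-!
Write `a(α) = √(ε/2)(1/α - α)` and `b(α) = -√(ε/2)(1/α + α)`, so that `B = Φ ∘ a - e^ε Φ ∘ b`.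
Since `b² - a² = 2ε`, the Gaussian densities satisfy `e^ε φ(b) = φ(a)`, hence
`B' = φ(a) (a' - b') = -2 √(ε/2) φ(a) / α² ≤ 0`.
-/

noncomputable def gaussPDF (t : ℝ) : ℝ :=
  Real.exp (-t ^ 2 / 2) / Real.sqrt (2 * Real.pi)

lemma gaussPDF_nonneg (t : ℝ) : 0 ≤ gaussPDF t := by
  unfold gaussPDF
  positivity

lemma continuous_gaussPDF : Continuous gaussPDF := by
  unfold gaussPDF
  fun_prop

lemma integrable_gaussPDF : Integrable gaussPDF := by
  have h : gaussPDF = fun y => Real.exp (-(1 / 2) * y ^ 2) / Real.sqrt (2 * Real.pi) := by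
    funext y
    unfold gaussPDF
    ring_nf
  rw [h]
  exact (integrable_exp_neg_mul_sq (by norm_num)).div_const _

lemma exp_mul_gaussPDF_of_sq_eq {a b ε : ℝ} (h : b ^ 2 = a ^ 2 + 2 * ε) :
    Real.exp ε * gaussPDF b = gaussPDF a := by
  unfold gaussPDF
  rw [h, mul_div_assoc', ← Real.exp_add]
  congr 2
  ring

lemma hasDerivAt_integral_Iic {f : ℝ → ℝ} (hint : Integrable f) (hcont : Continuous f) (t : ℝ) :
    HasDerivAt (fun s => ∫ y in Set.Iic s, f y) (f t) t := by
  have hsplit : (fun s => ∫ y in Set.Iic s, f y) =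
      fun s => (∫ y in Set.Iic 0, f y) + ∫ y in (0 : ℝ)..s, f y := by
    funext s
    rw [← intervalIntegral.integral_Iic_sub_Iic hint.integrableOn hint.integrableOn]
    ring
  rw [hsplit]
  exact (intervalIntegral.integral_hasDerivAt_right hint.intervalIntegrable
    hcont.stronglyMeasurable.stronglyMeasurableAtFilter hcont.continuousAt).const_add _

lemma hasDerivAt_Phi (t : ℝ) : HasDerivAt Phi (gaussPDF t) t :=
  hasDerivAt_integral_Iic integrable_gaussPDF continuous_gaussPDF t

lemma HasDerivAt.Phi_sub_exp_mul_Phi {f g : ℝ → ℝ} {f' g' x ε : ℝ}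
    (hf : HasDerivAt f f' x) (hg : HasDerivAt g g' x) (hfg : g x ^ 2 = f x ^ 2 + 2 * ε) :
    HasDerivAt (fun y => Phi (f y) - Real.exp ε * Phi (g y)) (gaussPDF (f x) * (f' - g')) x := by
  refine (((hasDerivAt_Phi (f x)).comp x hf).sub
    (((hasDerivAt_Phi (g x)).comp x hg).const_mul (Real.exp ε))).congr_deriv ?_
  rw [← mul_assoc, exp_mul_gaussPDF_of_sq_eq hfg]
  ring

lemma hasDerivAt_B {ε α : ℝ} (hε : 0 ≤ ε) (hα : 0 < α) :
    HasDerivAt (fun α : ℝ =>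
        Phi (Real.sqrt (ε / 2) * (1 / α - α)) -
          Real.exp ε * Phi (-(Real.sqrt (ε / 2) * (1 / α + α))))
      (gaussPDF (Real.sqrt (ε / 2) * (1 / α - α)) * (-2 * Real.sqrt (ε / 2) / α ^ 2)) α := by
  set c := Real.sqrt (ε / 2)
  have hc : c ^ 2 = ε / 2 := Real.sq_sqrt (by positivity)
  have hinv : HasDerivAt (fun α : ℝ => 1 / α) (-(α ^ 2)⁻¹) α := by
    simpa only [one_div] using hasDerivAt_inv hα.ne'
  have ha : HasDerivAt (fun α : ℝ => c * (1 / α - α)) (c * (-(α ^ 2)⁻¹ - 1)) α :=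
    (hinv.sub (hasDerivAt_id' α)).const_mul c
  have hb : HasDerivAt (fun α : ℝ => -(c * (1 / α + α))) (-(c * (-(α ^ 2)⁻¹ + 1))) α :=
    ((hinv.add (hasDerivAt_id' α)).const_mul c).neg
  refine (ha.Phi_sub_exp_mul_Phi hb ?_).congr_deriv ?_
  · field_simp
    linear_combination 4 * α ^ 2 * hc
  · field_simp
    ring

theorem B_antitone (ε : ℝ) (hε : 0 < ε) :
    AntitoneOn (fun α : ℝ =>
        Phi (Real.sqrt (ε / 2) * (1 / α - α)) -
          Real.exp ε * Phi (-(Real.sqrt (ε / 2) * (1 / α + α))))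
      (Set.Ioi (0 : ℝ)) := by
  have hderiv := fun α (hα : α ∈ Set.Ioi (0 : ℝ)) => hasDerivAt_B hε.le hα
  refine antitoneOn_of_hasDerivWithinAt_nonpos (convex_Ioi 0)
    (fun α hα => (hderiv α hα).continuousAt.continuousWithinAt)
    (fun α hα => (hderiv α (interior_subset hα)).hasDerivWithinAt) fun α hα => ?_
  have hα : 0 < α := interior_subset hα
  exact mul_nonpos_of_nonneg_of_nonpos (gaussPDF_nonneg _)
    (div_nonpos_of_nonpos_of_nonneg (by nlinarith [Real.sqrt_nonneg (ε / 2)]) (by positivity))
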